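/- Let n ∈ ℕ, a, b ∈ ℝ, c ≠ 0, and f(y1,y2) = c²(y1-a)^(2n+2) + (n+1)²(y2-b)². For 1 < p < ∞ with p ≠ n+2 let τ_p = (n+2-p)/((2n+2)(1-p)) and ψ = f^(τ_p). Then ψ satisfies Δ_p ψ = 0 on ℝ² \ {(a,b)}, where Δ_p ψ = Y1(‖∇₀ψ‖^(p-2) Y1ψ) + Y2(‖∇₀ψ‖^(p-2) Y2ψ). -/

import Mathlib

noncomputable section

abbrev P2 : Type := ℝ × ℝ

/-- Grushin vector field Y1 = ∂/∂y1 (real-valued functions). -/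
def Y1r (u : P2 → ℝ) (q : P2) : ℝ := fderiv ℝ u q (1, 0)

/-- Grushin vector field Y2 = c (y1-a)^n ∂/∂y2 (real-valued functions). -/
def Y2r (a c : ℝ) (n : ℕ) (u : P2 → ℝ) (q : P2) : ℝ :=
  c * (q.1 - a) ^ n * fderiv ℝ u q (0, 1)

/-- The function f(y) = c²(y1-a)^(2n+2) + (n+1)²(y2-b)². -/
def fG (a b c : ℝ) (n : ℕ) (q : P2) : ℝ :=
  c ^ 2 * (q.1 - a) ^ (2 * n + 2) + ((n : ℝ) + 1) ^ 2 * (q.2 - b) ^ 2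

/-- ψ = f^(τ_p). -/
def psiG (a b c : ℝ) (n : ℕ) (p : ℝ) (q : P2) : ℝ :=
  fG a b c n q ^ ((n + 2 - p) / ((2 * n + 2) * (1 - p)))

/-- The Grushin p-Laplacian of ψ. -/
def DeltaPG (a b c : ℝ) (n : ℕ) (p : ℝ) (ψ : P2 → ℝ) (q : P2) : ℝ :=
  Y1r (fun r => Real.sqrt ((Y1r ψ r) ^ 2 + (Y2r a c n ψ r) ^ 2) ^ (p - 2) * Y1r ψ r) q +
  Y2r a c n (fun r => Real.sqrt ((Y1r ψ r) ^ 2 + (Y2r a c n ψ r) ^ 2) ^ (p - 2) * Y2r a c n ψ r) q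

/-!
Write `x = y₁ - a`, `y = y₂ - b`, `m = n + 1`. Since `(Y₁f)² + (Y₂f)² = 4m²c²x²ⁿ f`, the
horizontal gradient of `ψ = f^τ` has norm `2m|cτ| f^(τ-1/2) |x|ⁿ`, so up to the constant
`(2m|cτ|)^(p-2) τ` the flux `‖∇₀ψ‖^(p-2) ∇₀ψ` is `f^E (2mc² x|x|^(np), 2m²c y xⁿ|x|^(n(p-2)))`
with `E = (p-1)τ - p/2`. Both components can be differentiated off `(a, b)`: the first because
`np ≥ 0`, the second wherever it matters, since `Y₂` carries the factor `c xⁿ`. Using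
`f = c²x²ⁿ⁺² + m²y²`, the divergence collapses to
`const · |x|^(np) f^E (2m(p-1)τ + n + 2 - p)`, whose last factor vanishes exactly for `τ = τ_p`.
-/

open Real Filter Topology Asymptotics

lemma hasDerivAt_mul_abs_rpow {α : ℝ} (hα : 0 ≤ α) (t : ℝ) :
    HasDerivAt (fun s : ℝ => s * |s| ^ α) ((1 + α) * |t| ^ α) t := by
  rcases eq_or_ne t 0 with rfl | ht
  · rcases hα.eq_or_lt with rfl | hα
    · simpa using hasDerivAt_id' (0 : ℝ)
    · have h0 : (fun s : ℝ => |s| ^ α) =o[𝓝 0] (fun _ => (1 : ℝ)) := by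
        rw [isLittleO_one_iff]
        simpa [zero_rpow hα.ne'] using
          (continuous_abs.tendsto (0 : ℝ)).rpow_const (Or.inr hα.le)
      rw [hasDerivAt_iff_isLittleO]
      simpa [zero_rpow hα.ne'] using (isBigO_refl (fun s : ℝ => s) (𝓝 0)).mul_isLittleO h0
  · refine ((hasDerivAt_id' t).mul
      ((hasDerivAt_abs ht).rpow_const (Or.inl (abs_ne_zero.2 ht)))).congr_deriv ?_
    rw [rpow_sub_one (abs_ne_zero.2 ht)]
    field_simp
    rw [self_mul_sign]
    ring

lemma abs_rpow_mul_pow_two_mul_add_one (x : ℝ) (k : ℕ) (γ : ℝ) :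
    |x| ^ (k * γ) * x ^ (2 * k + 1) = x * |x| ^ (k * (γ + 2)) := by
  rcases eq_or_ne x 0 with rfl | hx
  · simp
  · rw [pow_succ, ← pow_abs_two_mul, ← rpow_natCast, mul_left_comm, ← mul_assoc,
      ← rpow_add (abs_pos.2 hx)]
    push_cast
    ring_nf

lemma pow_two_mul_mul_abs_rpow (x : ℝ) (k : ℕ) {γ : ℝ} (hγ : 0 < γ + 2) :
    x ^ (2 * k) * |x| ^ (k * γ) = |x| ^ (k * (γ + 2)) := by
  rcases eq_or_ne x 0 with rfl | hx
  · rcases k.eq_zero_or_pos with rfl | hk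
    · simp
    · simp [zero_rpow (by positivity : (k : ℝ) * (γ + 2) ≠ 0), hk.ne']
  · rw [← pow_abs_two_mul, ← rpow_natCast, ← rpow_add (abs_pos.2 hx)]
    push_cast
    ring_nf

lemma differentiableAt_pow_mul_abs_rpow {t : ℝ} (k : ℕ) (γ : ℝ) (h : t ≠ 0 ∨ k = 0) :
    DifferentiableAt ℝ (fun s : ℝ => s ^ k * |s| ^ (k * γ)) t := by
  rcases h with ht | rfl
  · exact (differentiableAt_id.pow k).mul
      ((differentiableAt_abs ht).rpow_const (Or.inl (abs_ne_zero.2 ht)))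
  · simp

section Grushin

variable {a b c : ℝ} {n : ℕ}

lemma fG_pos (hc : c ≠ 0) {r : P2} (hr : r ≠ (a, b)) : 0 < fG a b c n r := by
  have hsum : fG a b c n r = (c * (r.1 - a) ^ (n + 1)) ^ 2 + (((n : ℝ) + 1) * (r.2 - b)) ^ 2 := by
    rw [fG]; ring
  rw [hsum]
  by_cases h1 : r.1 = a
  · have h2 : r.2 ≠ b := fun h2 => hr (Prod.ext h1 h2)
    have : ((n : ℝ) + 1) * (r.2 - b) ≠ 0 := mul_ne_zero (by positivity) (sub_ne_zero.2 h2)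
    positivity
  · have : c * (r.1 - a) ^ (n + 1) ≠ 0 := mul_ne_zero hc (pow_ne_zero _ (sub_ne_zero.2 h1))
    positivity

lemma hasFDerivAt_fG (r : P2) :
    HasFDerivAt (fG a b c n)
      ((2 * ((n : ℝ) + 1) * c ^ 2 * (r.1 - a) ^ (2 * n + 1)) • ContinuousLinearMap.fst ℝ ℝ ℝ +
        (2 * ((n : ℝ) + 1) ^ 2 * (r.2 - b)) • ContinuousLinearMap.snd ℝ ℝ ℝ) r := by
  have h1 := ((hasDerivAt_pow (2 * n + 2) (r.1 - a)).comp_hasFDerivAt r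
    ((hasFDerivAt_fst (𝕜 := ℝ) (p := r)).sub_const a)).const_mul (c ^ 2)
  have h2 := ((hasDerivAt_pow 2 (r.2 - b)).comp_hasFDerivAt r
    ((hasFDerivAt_snd (𝕜 := ℝ) (p := r)).sub_const b)).const_mul (((n : ℝ) + 1) ^ 2)
  refine (h1.add h2).congr_fderiv ?_
  ext <;> simp only [Nat.cast_add, Nat.cast_mul, Nat.cast_ofNat, Nat.add_one_sub_one, pow_one,
    ContinuousLinearMap.add_comp, ContinuousLinearMap.smul_comp, ContinuousLinearMap.fst_comp_inl,
    ContinuousLinearMap.snd_comp_inl, ContinuousLinearMap.fst_comp_inr,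
    ContinuousLinearMap.snd_comp_inr, smul_zero, add_zero, zero_add, smul_apply,
    ContinuousLinearMap.id_apply, smul_eq_mul, mul_one] <;> ring

def horizontalGradNorm (a c : ℝ) (n : ℕ) (u : P2 → ℝ) (r : P2) : ℝ :=
  √(Y1r u r ^ 2 + Y2r a c n u r ^ 2)

lemma DeltaPG_eq (p : ℝ) (ψ : P2 → ℝ) (q : P2) :
    DeltaPG a b c n p ψ q =
      Y1r (fun r => horizontalGradNorm a c n ψ r ^ (p - 2) * Y1r ψ r) q +
        Y2r a c n (fun r => horizontalGradNorm a c n ψ r ^ (p - 2) * Y2r a c n ψ r) q :=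
  rfl

lemma Filter.EventuallyEq.Y1r_eq {u v : P2 → ℝ} {q : P2} (h : u =ᶠ[𝓝 q] v) :
    Y1r u q = Y1r v q := by
  rw [Y1r, Y1r, h.fderiv_eq]

lemma Filter.EventuallyEq.Y2r_eq {u v : P2 → ℝ} {q : P2} (h : u =ᶠ[𝓝 q] v) :
    Y2r a c n u q = Y2r a c n v q := by
  rw [Y2r, Y2r, h.fderiv_eq]

lemma Y1r_fG_rpow (τ : ℝ) {r : P2} (hf : 0 < fG a b c n r) :
    Y1r (fun s => fG a b c n s ^ τ) r =
      τ * fG a b c n r ^ (τ - 1) * (2 * ((n : ℝ) + 1) * c ^ 2 * (r.1 - a) ^ (2 * n + 1)) := by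
  rw [Y1r, ((hasFDerivAt_fG r).rpow_const (Or.inl hf.ne')).fderiv]
  simp

lemma Y2r_fG_rpow (τ : ℝ) {r : P2} (hf : 0 < fG a b c n r) :
    Y2r a c n (fun s => fG a b c n s ^ τ) r =
      c * (r.1 - a) ^ n *
        (τ * fG a b c n r ^ (τ - 1) * (2 * ((n : ℝ) + 1) ^ 2 * (r.2 - b))) := by
  rw [Y2r, ((hasFDerivAt_fG r).rpow_const (Or.inl hf.ne')).fderiv]
  simp

lemma horizontalGradNorm_fG_rpow (τ : ℝ) {r : P2} (hf : 0 < fG a b c n r) :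
    horizontalGradNorm a c n (fun s => fG a b c n s ^ τ) r =
      2 * ((n : ℝ) + 1) * |c| * |τ| * fG a b c n r ^ (τ - 1 / 2) * |r.1 - a| ^ n := by
  have hsq : (fG a b c n r ^ (τ - 1 / 2)) ^ 2 = (fG a b c n r ^ (τ - 1)) ^ 2 * fG a b c n r := by
    rw [show τ - 1 / 2 = (τ - 1) + 1 / 2 by ring, rpow_add hf, ← sqrt_eq_rpow, mul_pow,
      sq_sqrt hf.le]
  rw [horizontalGradNorm, Y1r_fG_rpow τ hf, Y2r_fG_rpow τ hf,
    sqrt_eq_iff_eq_sq (by positivity) (by positivity)]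
  have hfG : fG a b c n r = c ^ 2 * (r.1 - a) ^ (2 * n + 2) + ((n : ℝ) + 1) ^ 2 * (r.2 - b) ^ 2 :=
    rfl
  have habs : (|r.1 - a| ^ n) ^ 2 = ((r.1 - a) ^ n) ^ 2 := by rw [pow_abs, sq_abs]
  simp only [mul_pow, hsq, habs, sq_abs]
  linear_combination
    (-4 * ((n : ℝ) + 1) ^ 2 * c ^ 2 * τ ^ 2 * (fG a b c n r ^ (τ - 1)) ^ 2 *
      ((r.1 - a) ^ n) ^ 2) * hfG

lemma horizontalGradNorm_fG_rpow_rpow (τ p : ℝ) {r : P2} (hf : 0 < fG a b c n r) :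
    horizontalGradNorm a c n (fun s => fG a b c n s ^ τ) r ^ (p - 2) =
      (2 * ((n : ℝ) + 1) * |c| * |τ|) ^ (p - 2) * fG a b c n r ^ ((τ - 1 / 2) * (p - 2)) *
        |r.1 - a| ^ (n * (p - 2)) := by
  rw [horizontalGradNorm_fG_rpow τ hf, mul_rpow (by positivity) (by positivity),
    mul_rpow (by positivity) (by positivity), ← rpow_mul hf.le,
    rpow_natCast_mul (abs_nonneg _)]

lemma horizontalGradNorm_rpow_mul_Y1r_fG_rpow (τ p : ℝ) {r : P2} (hf : 0 < fG a b c n r) :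
    horizontalGradNorm a c n (fun s => fG a b c n s ^ τ) r ^ (p - 2) *
        Y1r (fun s => fG a b c n s ^ τ) r =
      (2 * ((n : ℝ) + 1) * |c| * |τ|) ^ (p - 2) * τ * (2 * ((n : ℝ) + 1) * c ^ 2) *
        (fG a b c n r ^ ((p - 1) * τ - p / 2) * ((r.1 - a) * |r.1 - a| ^ (n * p))) := by
  have hx := abs_rpow_mul_pow_two_mul_add_one (r.1 - a) n (p - 2)
  rw [sub_add_cancel] at hx
  have hexp : (p - 1) * τ - p / 2 = (τ - 1 / 2) * (p - 2) + (τ - 1) := by ring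
  rw [horizontalGradNorm_fG_rpow_rpow τ p hf, Y1r_fG_rpow τ hf, ← hx, hexp, rpow_add hf]
  ring

lemma horizontalGradNorm_rpow_mul_Y2r_fG_rpow (τ p : ℝ) {r : P2} (hf : 0 < fG a b c n r) :
    horizontalGradNorm a c n (fun s => fG a b c n s ^ τ) r ^ (p - 2) *
        Y2r a c n (fun s => fG a b c n s ^ τ) r =
      (2 * ((n : ℝ) + 1) * |c| * |τ|) ^ (p - 2) * τ * (2 * ((n : ℝ) + 1) ^ 2 * c) *
        (fG a b c n r ^ ((p - 1) * τ - p / 2) * (r.2 - b) *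
          ((r.1 - a) ^ n * |r.1 - a| ^ (n * (p - 2)))) := by
  have hexp : (p - 1) * τ - p / 2 = (τ - 1 / 2) * (p - 2) + (τ - 1) := by ring
  rw [horizontalGradNorm_fG_rpow_rpow τ p hf, Y2r_fG_rpow τ hf, hexp, rpow_add hf]
  ring

lemma Y1r_fG_rpow_mul_mul_abs_rpow (C E : ℝ) {α : ℝ} (hα : 0 ≤ α) {q : P2}
    (hf : 0 < fG a b c n q) :
    Y1r (fun r => C * (fG a b c n r ^ E * ((r.1 - a) * |r.1 - a| ^ α))) q =
      C * |q.1 - a| ^ α * fG a b c n q ^ (E - 1) *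
        (2 * ((n : ℝ) + 1) * E * c ^ 2 * (q.1 - a) ^ (2 * n + 2) + (1 + α) * fG a b c n q) := by
  have hφ := (hasDerivAt_mul_abs_rpow hα (q.1 - a)).comp_hasFDerivAt q
    ((hasFDerivAt_fst (𝕜 := ℝ) (p := q)).sub_const a)
  have h : HasFDerivAt (fun r => C * (fG a b c n r ^ E * ((r.1 - a) * |r.1 - a| ^ α))) _ q :=
    (((hasFDerivAt_fG q).rpow_const (p := E) (Or.inl hf.ne')).mul hφ).const_mul C
  rw [Y1r, h.fderiv]
  simp only [Function.comp_apply, smul_add, add_apply, smul_apply,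
    ContinuousLinearMap.coe_fst', ContinuousLinearMap.coe_snd',
    smul_eq_mul, mul_one, mul_zero, add_zero]
  rw [rpow_sub_one hf.ne']
  field_simp
  ring

lemma Y2r_fG_rpow_mul_mul_pow_mul_abs_rpow (C E : ℝ) {p : ℝ} (hp : 0 < p) {q : P2}
    (hf : 0 < fG a b c n q) :
    Y2r a c n (fun r => C * (fG a b c n r ^ E * (r.2 - b) *
        ((r.1 - a) ^ n * |r.1 - a| ^ (n * (p - 2))))) q =
      C * c * |q.1 - a| ^ (n * p) * fG a b c n q ^ (E - 1) *
        (2 * ((n : ℝ) + 1) ^ 2 * E * (q.2 - b) ^ 2 + fG a b c n q) := by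
  by_cases hdeg : q.1 - a = 0 ∧ n ≠ 0
  · have hnp : (n : ℝ) * p ≠ 0 := mul_ne_zero (Nat.cast_ne_zero.2 hdeg.2) hp.ne'
    simp [Y2r, hdeg.1, hdeg.2, zero_rpow hnp]
  · have hχ := (differentiableAt_pow_mul_abs_rpow n (p - 2) (by tauto)).hasDerivAt
      |>.comp_hasFDerivAt q ((hasFDerivAt_fst (𝕜 := ℝ) (p := q)).sub_const a)
    have h : HasFDerivAt (fun r => C * (fG a b c n r ^ E * (r.2 - b) *
        ((r.1 - a) ^ n * |r.1 - a| ^ (n * (p - 2))))) _ q :=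
      ((((hasFDerivAt_fG q).rpow_const (p := E) (Or.inl hf.ne')).mul
        ((hasFDerivAt_snd (𝕜 := ℝ) (p := q)).sub_const b)).mul hχ).const_mul C
    have hx := pow_two_mul_mul_abs_rpow (q.1 - a) n (γ := p - 2) (by linarith)
    rw [sub_add_cancel] at hx
    rw [Y2r, h.fderiv]
    simp only [Pi.mul_apply, Function.comp_apply, smul_add, add_apply, smul_apply,
      ContinuousLinearMap.coe_fst', ContinuousLinearMap.coe_snd',
      smul_eq_mul, mul_one, mul_zero, zero_add]
    rw [← hx, rpow_sub_one hf.ne']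
    field_simp
    ring

theorem DeltaPG_fG_rpow (hc : c ≠ 0) {p : ℝ} (hp : 0 < p) (τ : ℝ) {q : P2}
    (hq : q ≠ (a, b)) :
    DeltaPG a b c n p (fun r => fG a b c n r ^ τ) q =
      (2 * ((n : ℝ) + 1) * |c| * |τ|) ^ (p - 2) * τ * (2 * ((n : ℝ) + 1) * c ^ 2) *
        |q.1 - a| ^ (n * p) * fG a b c n q ^ ((p - 1) * τ - p / 2) *
          (2 * ((n : ℝ) + 1) * (p - 1) * τ + n + 2 - p) := by
  have hf : ∀ᶠ r in 𝓝 q, 0 < fG a b c n r :=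
    eventually_of_mem (isOpen_compl_singleton.mem_nhds hq) fun r hr => fG_pos hc hr
  have hfq : 0 < fG a b c n q := hf.self_of_nhds
  have hflux₁ := hf.mono fun r hr => horizontalGradNorm_rpow_mul_Y1r_fG_rpow τ p hr
  have hflux₂ := hf.mono fun r hr => horizontalGradNorm_rpow_mul_Y2r_fG_rpow τ p hr
  rw [DeltaPG_eq, Filter.EventuallyEq.Y1r_eq hflux₁, Filter.EventuallyEq.Y2r_eq hflux₂,
    Y1r_fG_rpow_mul_mul_abs_rpow _ _ (by positivity) hfq,
    Y2r_fG_rpow_mul_mul_pow_mul_abs_rpow _ _ hp hfq]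
  set E := (p - 1) * τ - p / 2
  set C := (2 * ((n : ℝ) + 1) * |c| * |τ|) ^ (p - 2) * τ * (2 * ((n : ℝ) + 1) * c ^ 2) *
    |q.1 - a| ^ (n * p)
  have hE : fG a b c n q ^ E = fG a b c n q ^ (E - 1) * fG a b c n q := by
    rw [← rpow_add_one hfq.ne', sub_add_cancel]
  have hfG : fG a b c n q = c ^ 2 * (q.1 - a) ^ (2 * n + 2) + ((n : ℝ) + 1) ^ 2 * (q.2 - b) ^ 2 :=
    rfl
  linear_combination (-C * (2 * ((n : ℝ) + 1) * (p - 1) * τ + n + 2 - p)) * hE -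
    (C * fG a b c n q ^ (E - 1) * 2 * ((n : ℝ) + 1) * E) * hfG

end Grushin

theorem grushin_p_harmonic_general (a b c : ℝ) (hc : c ≠ 0) (n : ℕ) (p : ℝ)
    (hp1 : 1 < p) (q : P2) (hq : q ≠ (a, b)) :
    DeltaPG a b c n p (psiG a b c n p) q = 0 := by
  set τ : ℝ := (n + 2 - p) / ((2 * n + 2) * (1 - p)) with hτ_def
  have hτ : 2 * ((n : ℝ) + 1) * (p - 1) * τ + n + 2 - p = 0 := by
    rw [hτ_def]
    field_simp [sub_ne_zero.2 hp1.ne]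
    ring
  have h := DeltaPG_fG_rpow (n := n) hc (one_pos.trans hp1) τ hq
  rw [hτ, mul_zero] at h
  exact h

theorem grushin_p_harmonic (a b c : ℝ) (hc : c ≠ 0) (n : ℕ) (p : ℝ)
    (hp1 : 1 < p) (hpn : p ≠ n + 2) (q : P2) (hq : q ≠ (a, b)) :
    DeltaPG a b c n p (psiG a b c n p) q = 0 :=
  grushin_p_harmonic_general a b c hc n p hp1 q hq
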